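/- arXiv:1507.06061 — 4 statements merged into one kernel-verified Lean document; each statement's English description precedes it below -/
import Mathlib

section
/- Let α > 0 and let β : ℝ → ℝ be a C¹, 2π-periodic function with ∫₀^{2π} β(s) ds > 0. Then there exists a unique C², positive, 2π-periodic function Δ : ℝ → ℝ solving Δ'(s) = α − β(s)Δ(s) for all s, and it is given explicitly by Δ(s) = α · (∫_s^{s+2π} exp(∫_s^t β(u) du) dt) / (exp(∫₀^{2π} β(u) du) − 1). -/
/-!
With `B s = ∫₀ˢ β`, the equation `Δ' = α - βΔ` reads `(e^B Δ)' = α e^B`. The difference of two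
solutions is therefore `c e^{-B}`, and `B (s + 2π) = B s + ∫₀^{2π} β` with `∫₀^{2π} β ≠ 0`, so
`e^{-B}` is not periodic and periodic solutions are unique. Conversely, writing
`∫_s^{s+2π} e^{∫_s^t β} dt = e^{-B s} ∫_s^{s+2π} e^{B}` and differentiating shows that the
explicit formula solves the equation; it is periodic by the substitution `t ↦ t + 2π`, and
its regularity is bootstrapped from the equation itself.
-/

open Real intervalIntegral Function

section AffineODE

variable {α T : ℝ} {β Δ : ℝ → ℝ}

theorem exp_integral_eq_exp_neg_mul_exp (hβ : Continuous β) (s t : ℝ) :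
    exp (∫ u in s..t, β u) = exp (-∫ u in (0:ℝ)..s, β u) * exp (∫ u in (0:ℝ)..t, β u) := by
  rw [← exp_add, ← integral_interval_sub_left (hβ.intervalIntegrable 0 t)
    (hβ.intervalIntegrable 0 s)]
  ring_nf

theorem hasDerivAt_integral_exp_integral (hβ : Continuous β) (hper : Periodic β T) (s : ℝ) :
    HasDerivAt (fun s => ∫ t in s..(s + T), exp (∫ u in s..t, β u))
      (exp (∫ u in (0:ℝ)..T, β u) - 1 -
        β s * ∫ t in s..(s + T), exp (∫ u in s..t, β u)) s := by
  set B : ℝ → ℝ := fun s => ∫ u in (0:ℝ)..s, β u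
  have hB (s : ℝ) : HasDerivAt B (β s) s := (hβ.integral_hasStrictDerivAt 0 s).hasDerivAt
  have hexpB : Continuous fun t => exp (B t) :=
    continuous_exp.comp (continuous_primitive hβ.intervalIntegrable 0)
  set G : ℝ → ℝ := fun s => ∫ t in (0:ℝ)..s, exp (B t)
  have hG (s : ℝ) : HasDerivAt G (exp (B s)) s :=
    (hexpB.integral_hasStrictDerivAt 0 s).hasDerivAt
  have hfactor (s : ℝ) : ∫ t in s..(s + T), exp (∫ u in s..t, β u) =
      exp (-B s) * (G (s + T) - G s) := by
    simp only [exp_integral_eq_exp_neg_mul_exp hβ s, integral_const_mul, G,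
      integral_interval_sub_left (hexpB.intervalIntegrable 0 _) (hexpB.intervalIntegrable 0 s)]
    rfl
  have hshift : exp (-B s) * exp (B (s + T)) = exp (∫ u in (0:ℝ)..T, β u) := by
    rw [← exp_integral_eq_exp_neg_mul_exp hβ, hper.intervalIntegral_add_eq s 0, zero_add]
  have hcancel : exp (-B s) * exp (B s) = 1 := by rw [← exp_add, neg_add_cancel, exp_zero]
  have hderiv := ((hB s).neg.exp).mul (((hG (s + T)).comp s
    ((hasDerivAt_id s).add_const T)).sub (hG s))
  refine (hderiv.congr_of_eventuallyEq (.of_forall hfactor)).congr_deriv ?_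
  simp only [hfactor s, Pi.neg_apply, Pi.sub_apply, comp_apply, id]
  linear_combination hshift - hcancel

/-- When `∫₀ᵀ β = 0` the denominator vanishes and this is `0` by the convention `x / 0 = 0`. -/
noncomputable def periodicSolution (α : ℝ) (β : ℝ → ℝ) (T s : ℝ) : ℝ :=
  α * (∫ t in s..(s + T), exp (∫ u in s..t, β u)) / (exp (∫ u in (0:ℝ)..T, β u) - 1)

theorem hasDerivAt_periodicSolution (hβ : Continuous β) (hper : Periodic β T)
    (hL : ∫ u in (0:ℝ)..T, β u ≠ 0) (s : ℝ) :
    HasDerivAt (periodicSolution α β T) (α - β s * periodicSolution α β T s) s := by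
  have hE : exp (∫ u in (0:ℝ)..T, β u) - 1 ≠ 0 :=
    sub_ne_zero.2 fun h => hL (exp_eq_one_iff _ |>.1 h)
  refine (((hasDerivAt_integral_exp_integral hβ hper s).const_mul α).div_const _).congr_deriv ?_
  unfold periodicSolution
  field_simp

theorem periodicSolution_periodic (hper : Periodic β T) :
    Periodic (periodicSolution α β T) T := by
  intro s
  have hinner (t : ℝ) : ∫ u in (s + T)..(t + T), β u = ∫ u in s..t, β u := by
    rw [← integral_comp_add_right]
    exact integral_congr fun u _ => hper u
  unfold periodicSolution
  rw [← integral_comp_add_right]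
  simp only [hinner]

theorem periodicSolution_pos (hα : 0 < α) (hβ : Continuous β) (hT : 0 < T)
    (hL : 0 < ∫ u in (0:ℝ)..T, β u) (s : ℝ) : 0 < periodicSolution α β T s := by
  have hint : 0 < ∫ t in s..(s + T), exp (∫ u in s..t, β u) :=
    intervalIntegral_pos_of_pos
      ((continuous_exp.comp (continuous_primitive hβ.intervalIntegrable s)).intervalIntegrable _ _)
      (fun _ => exp_pos _) (by linarith)
  have hE : 0 < exp (∫ u in (0:ℝ)..T, β u) - 1 := by
    linarith [add_one_lt_exp hL.ne']
  exact div_pos (mul_pos hα hint) hE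

theorem contDiff_succ_of_hasDerivAt {n : ℕ} (hβ : ContDiff ℝ n β)
    (hΔ : ∀ s, HasDerivAt Δ (α - β s * Δ s) s) : ContDiff ℝ (n + 1) Δ := by
  have hdiff : Differentiable ℝ Δ := fun s => (hΔ s).differentiableAt
  have hderiv : deriv Δ = fun s => α - β s * Δ s := funext fun s => (hΔ s).deriv
  induction n with
  | zero =>
    rw [Nat.cast_zero, zero_add, contDiff_one_iff_deriv, hderiv]
    exact ⟨hdiff, continuous_const.sub (hβ.continuous.mul hdiff.continuous)⟩
  | succ n ih =>
    have hΔn : ContDiff ℝ (n + 1) Δ := ih (hβ.of_le (by norm_cast; omega))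
    rw [Nat.cast_succ, contDiff_succ_iff_deriv, hderiv]
    exact ⟨hdiff, by simp, contDiff_const.sub (hβ.mul hΔn)⟩

theorem eq_mul_exp_neg_integral_of_hasDerivAt (hβ : Continuous β)
    (hΔ : ∀ s, HasDerivAt Δ (-(β s * Δ s)) s) (s : ℝ) :
    Δ s = Δ 0 * exp (-∫ u in (0:ℝ)..s, β u) := by
  have hB (s : ℝ) : HasDerivAt (fun s => ∫ u in (0:ℝ)..s, β u) (β s) s :=
    (hβ.integral_hasStrictDerivAt 0 s).hasDerivAt
  have hconst (s : ℝ) : HasDerivAt (fun s => Δ s * exp (∫ u in (0:ℝ)..s, β u)) 0 s := by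
    refine ((hΔ s).mul (hB s).exp).congr_deriv ?_
    ring
  have h := is_const_of_deriv_eq_zero (fun s => (hconst s).differentiableAt)
    (fun s => (hconst s).deriv) s 0
  simp only [integral_same, exp_zero, mul_one] at h
  rw [← h, mul_assoc, ← exp_add, add_neg_cancel, exp_zero, mul_one]

theorem eq_zero_of_hasDerivAt_of_periodic (hβ : Continuous β) (hL : ∫ u in (0:ℝ)..T, β u ≠ 0)
    (hΔ : ∀ s, HasDerivAt Δ (-(β s * Δ s)) s) (hper : Periodic Δ T) : Δ = 0 := by
  have hΔ0 : Δ 0 = 0 := by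
    have h := eq_mul_exp_neg_integral_of_hasDerivAt hβ hΔ T
    rw [← zero_add T, hper, zero_add] at h
    have hexp : exp (-∫ u in (0:ℝ)..T, β u) ≠ 1 := fun h1 =>
      hL (neg_eq_zero.1 (exp_eq_one_iff _ |>.1 h1))
    by_contra h0
    exact hexp (mul_left_cancel₀ h0 (h.symm.trans (mul_one _).symm))
  funext s
  rw [eq_mul_exp_neg_integral_of_hasDerivAt hβ hΔ s, hΔ0, zero_mul, Pi.zero_apply]

theorem eq_of_hasDerivAt_of_periodic (hβ : Continuous β) (hL : ∫ u in (0:ℝ)..T, β u ≠ 0)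
    {Δ₁ Δ₂ : ℝ → ℝ} (h₁ : ∀ s, HasDerivAt Δ₁ (α - β s * Δ₁ s) s)
    (h₂ : ∀ s, HasDerivAt Δ₂ (α - β s * Δ₂ s) s) (hper₁ : Periodic Δ₁ T)
    (hper₂ : Periodic Δ₂ T) : Δ₁ = Δ₂ := by
  have hdiff : Δ₁ - Δ₂ = 0 := by
    refine eq_zero_of_hasDerivAt_of_periodic hβ hL (fun s => ?_) (hper₁.sub hper₂)
    refine ((h₁ s).sub (h₂ s)).congr_deriv ?_
    simp only [Pi.sub_apply]
    ring
  exact sub_eq_zero.1 hdiff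

end AffineODE

theorem stmt0 (α : ℝ) (hα : 0 < α) (β : ℝ → ℝ) (hβ : ContDiff ℝ 1 β)
    (hβper : Function.Periodic β (2 * π))
    (hβint : 0 < ∫ s in (0:ℝ)..(2 * π), β s) :
    ∃ Δ : ℝ → ℝ,
      (∀ s, HasDerivAt Δ (α - β s * Δ s) s) ∧
      Function.Periodic Δ (2 * π) ∧
      ContDiff ℝ 2 Δ ∧
      (∀ s, 0 < Δ s) ∧
      (∀ s, Δ s = α * (∫ t in s..(s + 2 * π), Real.exp (∫ u in s..t, β u)) /
          (Real.exp (∫ u in (0:ℝ)..(2 * π), β u) - 1)) ∧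
      (∀ Δ' : ℝ → ℝ, (∀ s, HasDerivAt Δ' (α - β s * Δ' s) s) →
        Function.Periodic Δ' (2 * π) → Δ' = Δ) := by
  have hβc : Continuous β := hβ.continuous
  have hODE := hasDerivAt_periodicSolution (α := α) hβc hβper hβint.ne'
  have hper := periodicSolution_periodic (α := α) hβper
  refine ⟨periodicSolution α β (2 * π), hODE, hper, ?_,
    periodicSolution_pos hα hβc (by positivity) hβint, fun s => rfl,
    fun Δ' hΔ' hper' => eq_of_hasDerivAt_of_periodic hβc hβint.ne' hΔ' hODE hper' hper⟩
  exact contDiff_succ_of_hasDerivAt (n := 1) (by exact_mod_cast hβ) hODE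
end

section
/- Let α > 0 and β : ℝ → ℝ be C¹, 2π-periodic with ∫₀^{2π} β(s) ds > 0, and let Δ be the unique positive 2π-periodic solution of Δ' = α − βΔ. Then max_{s∈ℝ} Δ(s) ≤ α · 2π · exp(∫₀^{2π} β⁻(u) du) / (1 − exp(−∫₀^{2π} β(u) du)), where β⁻ = max(0, −β). -/
/-!
Multiplying by the integrating factor `exp (∫ₛᵗ β)` turns `Δ' = α - β Δ` into
`(exp (∫ₛᵗ β) Δ t)' = α exp (∫ₛᵗ β)`. Integrating over one period and using periodicity gives
`Δ s (exp (∫₀^{2π} β) - 1) = α ∫ₛ^{s+2π} exp (∫ₛᵗ β) dt`, and on `[s, s + 2π]` the exponent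
`∫ₛᵗ β` is at most `∫₀^{2π} β⁺ = ∫₀^{2π} β + ∫₀^{2π} β⁻`.
-/

open Real intervalIntegral Set

theorem exp_integral_mul_sub_eq_integral {α : ℝ} {β Δ : ℝ → ℝ} (hβ : Continuous β)
    (hΔ : ∀ t, HasDerivAt Δ (α - β t * Δ t) t) (a b : ℝ) :
    exp (∫ u in a..b, β u) * Δ b - Δ a = α * ∫ t in a..b, exp (∫ u in a..t, β u) := by
  have hB (t : ℝ) : HasDerivAt (fun t => ∫ u in a..t, β u) (β t) t :=
    (hβ.integral_hasStrictDerivAt a t).hasDerivAt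
  have hE : Continuous fun t => exp (∫ u in a..t, β u) :=
    continuous_exp.comp (continuous_primitive hβ.intervalIntegrable a)
  have hEΔ (t : ℝ) : HasDerivAt (fun t => exp (∫ u in a..t, β u) * Δ t)
      (α * exp (∫ u in a..t, β u)) t :=
    ((hB t).exp.mul (hΔ t)).congr_deriv (by ring)
  rw [← integral_const_mul, integral_eq_sub_of_hasDerivAt (fun t _ => hEΔ t)
    ((continuous_const.mul hE).intervalIntegrable _ _)]
  simp

theorem Function.Periodic.mul_exp_integral_sub_one_eq {α T : ℝ} {β Δ : ℝ → ℝ}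
    (hβper : Function.Periodic β T) (hβ : Continuous β)
    (hΔ : ∀ t, HasDerivAt Δ (α - β t * Δ t) t) (hΔper : Function.Periodic Δ T) (a : ℝ) :
    Δ a * (exp (∫ u in (0:ℝ)..T, β u) - 1) = α * ∫ t in a..a + T, exp (∫ u in a..t, β u) := by
  rw [← exp_integral_mul_sub_eq_integral hβ hΔ, hΔper a, hβper.intervalIntegral_add_eq a 0,
    zero_add]
  ring

theorem integral_le_integral_max_zero {f : ℝ → ℝ} (hf : Continuous f) {a b u : ℝ}
    (hu : u ∈ Icc a b) : ∫ x in a..u, f x ≤ ∫ x in a..b, max 0 (f x) := by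
  have hf' : Continuous fun x => max 0 (f x) := continuous_const.max hf
  calc ∫ x in a..u, f x ≤ ∫ x in a..u, max 0 (f x) :=
        integral_mono_on hu.1 (hf.intervalIntegrable _ _) (hf'.intervalIntegrable _ _)
          fun x _ => le_max_right _ _
    _ ≤ ∫ x in a..b, max 0 (f x) :=
        integral_mono_interval le_rfl hu.1 hu.2
          (MeasureTheory.ae_of_all _ fun x => le_max_left _ _) (hf'.intervalIntegrable _ _)

theorem integral_exp_integral_le {β : ℝ → ℝ} (hβ : Continuous β) {a b : ℝ} (hab : a ≤ b) :
    ∫ t in a..b, exp (∫ u in a..t, β u) ≤ (b - a) * exp (∫ u in a..b, max 0 (β u)) := by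
  have hE : Continuous fun t => exp (∫ u in a..t, β u) :=
    continuous_exp.comp (continuous_primitive hβ.intervalIntegrable a)
  calc ∫ t in a..b, exp (∫ u in a..t, β u)
      ≤ ∫ _ in a..b, exp (∫ u in a..b, max 0 (β u)) :=
        integral_mono_on hab (hE.intervalIntegrable _ _) intervalIntegrable_const
          fun t ht => exp_le_exp.2 (integral_le_integral_max_zero hβ ht)
    _ = (b - a) * exp (∫ u in a..b, max 0 (β u)) := by rw [integral_const, smul_eq_mul]

theorem integral_max_zero_eq_add {f : ℝ → ℝ} (hf : Continuous f) (a b : ℝ) :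
    ∫ x in a..b, max 0 (f x) = (∫ x in a..b, f x) + ∫ x in a..b, max 0 (-f x) := by
  rw [← integral_add (g := fun x => max 0 (-f x)) (hf.intervalIntegrable _ _)
    ((continuous_const.max hf.neg).intervalIntegrable _ _)]
  congr 1 with x
  rcases le_total 0 (f x) with h | h <;> simp [h]

theorem stmt1_general (α : ℝ) (hα : 0 < α) (β : ℝ → ℝ) (hβ : ContDiff ℝ 1 β)
    (hβper : Function.Periodic β (2 * π))
    (hβint : 0 < ∫ s in (0:ℝ)..(2 * π), β s)
    (Δ : ℝ → ℝ)
    (hΔode : ∀ s, HasDerivAt Δ (α - β s * Δ s) s)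
    (hΔper : Function.Periodic Δ (2 * π)) :
    ∀ s, Δ s ≤ α * (2 * π) * Real.exp (∫ u in (0:ℝ)..(2 * π), max 0 (-(β u))) /
      (1 - Real.exp (-(∫ u in (0:ℝ)..(2 * π), β u))) := by
  intro s
  have hβc := hβ.continuous
  set I := ∫ u in (0:ℝ)..(2 * π), β u
  set J := ∫ u in (0:ℝ)..(2 * π), max 0 (-(β u))
  have hmaxper : Function.Periodic (fun u => max 0 (β u)) (2 * π) := hβper.comp _
  have hbound : Δ s * (exp I - 1) ≤ α * (2 * π) * exp (I + J) :=
    calc Δ s * (exp I - 1) = α * ∫ t in s..s + 2 * π, exp (∫ u in s..t, β u) :=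
          hβper.mul_exp_integral_sub_one_eq hβc hΔode hΔper s
      _ ≤ α * ((s + 2 * π - s) * exp (∫ u in s..s + 2 * π, max 0 (β u))) :=
          mul_le_mul_of_nonneg_left (integral_exp_integral_le hβc (by linarith [pi_pos])) hα.le
      _ = α * (2 * π) * exp (I + J) := by
          rw [hmaxper.intervalIntegral_add_eq s 0, zero_add, integral_max_zero_eq_add hβc]
          ring
  have hden : 0 < exp I - 1 := sub_pos.2 (one_lt_exp_iff.2 hβint)
  have hrhs : α * (2 * π) * exp J / (1 - exp (-I)) =
      α * (2 * π) * exp (I + J) / (exp I - 1) := by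
    rw [exp_neg, exp_add]
    field_simp
  rwa [hrhs, le_div_iff₀ hden]

theorem stmt1 (α : ℝ) (hα : 0 < α) (β : ℝ → ℝ) (hβ : ContDiff ℝ 1 β)
    (hβper : Function.Periodic β (2 * π))
    (hβint : 0 < ∫ s in (0:ℝ)..(2 * π), β s)
    (Δ : ℝ → ℝ)
    (hΔode : ∀ s, HasDerivAt Δ (α - β s * Δ s) s)
    (hΔper : Function.Periodic Δ (2 * π))
    (hΔpos : ∀ s, 0 < Δ s) :
    ∀ s, Δ s ≤ α * (2 * π) * Real.exp (∫ u in (0:ℝ)..(2 * π), max 0 (-(β u))) /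
      (1 - Real.exp (-(∫ u in (0:ℝ)..(2 * π), β u))) :=
  stmt1_general α hα β hβ hβper hβint Δ hΔode hΔper
end

section
/- Let X(t) = (x₁(t),…,x_N(t)) solve the Winfree model ẋᵢ = ωᵢ − (κ/N) Σⱼ P(xⱼ) R(xᵢ) with P, R of class C² and 2π-periodic, ωᵢ ∈ (1−γ, 1+γ). Suppose on [0,t*] the dispersion satisfies max_{i,j}|xᵢ(t) − xⱼ(t)| < D. Then for all i,j and t ∈ [0,t*], setting μ(t) = (1/N)Σ_k x_k(t) and δ_{i,j} = xᵢ − xⱼ, one has d/dt δ_{i,j} < (2γ + Cκ D²) − κ P(μ) R'(μ) δ_{i,j}, where C = ‖P‖_∞‖R''‖_∞ + ‖P'‖_∞‖R'‖_∞. -/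
/-!
Write `μ` for the mean of the phases and `P̄` for the mean of `P(xₖ)`. The difference of two
equations is `δ̇ᵢⱼ = (ωᵢ - ωⱼ) - κ P̄ (R(xᵢ) - R(xⱼ))`, and `ωᵢ - ωⱼ < 2γ`. Every phase lies within
`D` of `μ`, so the mean value inequality gives `|P̄ - P(μ)| ≤ ‖P'‖∞ D` and
`|R(xᵢ) - R(xⱼ) - R'(μ) δᵢⱼ| ≤ ‖R''‖∞ D |δᵢⱼ|`. Splitting
`P̄ (R(xᵢ) - R(xⱼ)) - P(μ) R'(μ) δᵢⱼ = P̄ (R(xᵢ) - R(xⱼ) - R'(μ) δᵢⱼ) + (P̄ - P(μ)) R'(μ) δᵢⱼ`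
bounds the coupling term by `C D²` away from its linearisation at `μ`.
-/

open Real Finset

theorem Function.Periodic.deriv {f : ℝ → ℝ} {c : ℝ} (hf : Function.Periodic f c) :
    Function.Periodic (deriv f) c := by
  intro y
  rw [← deriv_comp_add_const, show (fun x => f (x + c)) = f from funext hf]

theorem Function.Periodic.abs_le_iSup_abs {f : ℝ → ℝ} {c : ℝ} (hf : Function.Periodic f c)
    (hc : c ≠ 0) (hcont : Continuous f) (y : ℝ) : |f y| ≤ ⨆ z, |f z| :=
  le_ciSup ((hf.comp abs).isBounded_of_continuous hc hcont.abs).bddAbove y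

theorem abs_sub_le_of_abs_deriv_le {f : ℝ → ℝ} (hf : Differentiable ℝ f) {K : ℝ}
    (hK : ∀ y, |deriv f y| ≤ K) (a b : ℝ) : |f a - f b| ≤ K * |a - b| := by
  simpa only [Real.norm_eq_abs] using convex_univ.norm_image_sub_le_of_norm_deriv_le
    (fun y _ => hf y) (fun y _ => hK y) (Set.mem_univ b) (Set.mem_univ a)

theorem abs_sub_sub_mul_le_of_abs_deriv_sub_le {f : ℝ → ℝ} {s : Set ℝ} (hs : Convex ℝ s)
    (hf : ∀ y ∈ s, DifferentiableAt ℝ f y) {c K : ℝ} (hK : ∀ y ∈ s, |deriv f y - c| ≤ K)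
    {a b : ℝ} (ha : a ∈ s) (hb : b ∈ s) : |f a - f b - c * (a - b)| ≤ K * |a - b| := by
  have hg : ∀ y ∈ s, HasDerivAt (fun z => f z - c * z) (deriv f y - c) y := fun y hy => by
    have := (hf y hy).hasDerivAt.sub ((hasDerivAt_id' y).const_mul c)
    rwa [mul_one] at this
  have := hs.norm_image_sub_le_of_norm_deriv_le (fun y hy => (hg y hy).differentiableAt)
    (fun y hy => by rw [(hg y hy).deriv]; exact hK y hy) hb ha
  rw [Real.norm_eq_abs, Real.norm_eq_abs] at this
  convert this using 2
  ring

theorem abs_sum_div_card_sub_le {ι : Type*} {s : Finset ι} (hs : s.Nonempty) {f : ι → ℝ}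
    {c D : ℝ} (h : ∀ k ∈ s, |f k - c| ≤ D) : |(∑ k ∈ s, f k) / #s - c| ≤ D := by
  have hcard : (0 : ℝ) < #s := by exact_mod_cast hs.card_pos
  have hsplit : (∑ k ∈ s, f k) / #s - c = (∑ k ∈ s, (f k - c)) / #s := by
    rw [sum_sub_distrib, sum_const, nsmul_eq_mul]
    field_simp
  rw [hsplit, abs_div, abs_of_pos hcard, div_le_iff₀ hcard]
  calc |∑ k ∈ s, (f k - c)| ≤ ∑ k ∈ s, |f k - c| := abs_sum_le_sum_abs _ _
    _ ≤ ∑ _k ∈ s, D := sum_le_sum h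
    _ = D * #s := by rw [sum_const, nsmul_eq_mul, mul_comm]

theorem abs_mean_mul_sub_sub_linearization_le {n : ℕ} {P R : ℝ → ℝ} (hP : Differentiable ℝ P)
    (hR : Differentiable ℝ R) (hR' : Differentiable ℝ (deriv R)) {p p' r' r'' D : ℝ}
    (bP : ∀ y, |P y| ≤ p) (bP' : ∀ y, |deriv P y| ≤ p') (bR' : ∀ y, |deriv R y| ≤ r')
    (bR'' : ∀ y, |deriv (deriv R) y| ≤ r'') (y : Fin n → ℝ) (hy : ∀ k l, |y k - y l| ≤ D)
    (i j : Fin n) :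
    |(∑ k, P (y k)) / n * (R (y i) - R (y j))
        - P ((∑ k, y k) / n) * deriv R ((∑ k, y k) / n) * (y i - y j)|
      ≤ (p * r'' + p' * r') * D ^ 2 := by
  set μ := (∑ k, y k) / n
  set Pm := (∑ k, P (y k)) / n
  have mean_sub_le : ∀ {f : Fin n → ℝ} {c K : ℝ},
      (∀ k, |f k - c| ≤ K) → |(∑ k, f k) / n - c| ≤ K :=
    fun h => by simpa using abs_sum_div_card_sub_le ⟨i, mem_univ i⟩ fun k _ => h k
  have hD : 0 ≤ D := (abs_nonneg _).trans (hy i i)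
  have hp' : 0 ≤ p' := (abs_nonneg _).trans (bP' 0)
  have hr'' : 0 ≤ r'' := (abs_nonneg _).trans (bR'' 0)
  have hμ : ∀ k, |y k - μ| ≤ D := fun k => by
    rw [abs_sub_comm]; exact mean_sub_le fun l => hy l k
  have hPm : |Pm| ≤ p := by simpa using mean_sub_le (c := 0) fun k => by simpa using bP (y k)
  have hPm_sub : |Pm - P μ| ≤ p' * D := mean_sub_le fun k =>
    (abs_sub_le_of_abs_deriv_le hP bP' _ _).trans (by gcongr; exact hμ k)
  have hR'_near : ∀ z ∈ Metric.closedBall μ D, |deriv R z - deriv R μ| ≤ r'' * D := fun z hz =>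
    (abs_sub_le_of_abs_deriv_le hR' bR'' _ _).trans (by gcongr; exact hz)
  have hlin : |R (y i) - R (y j) - deriv R μ * (y i - y j)| ≤ r'' * D * |y i - y j| :=
    abs_sub_sub_mul_le_of_abs_deriv_sub_le (convex_closedBall μ D) (fun z _ => hR z) hR'_near
      (by simpa [Real.dist_eq] using hμ i) (by simpa [Real.dist_eq] using hμ j)
  calc _ = |Pm * (R (y i) - R (y j) - deriv R μ * (y i - y j))
          + (Pm - P μ) * deriv R μ * (y i - y j)| := by ring_nf
    _ ≤ |Pm| * (r'' * D * |y i - y j|) + p' * D * r' * |y i - y j| := by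
      refine (abs_add_le _ _).trans ?_
      rw [abs_mul, abs_mul, abs_mul]
      gcongr
      exact bR' μ
    _ ≤ p * (r'' * D * D) + p' * D * r' * D := by
      have hr' : 0 ≤ r' := (abs_nonneg _).trans (bR' 0)
      gcongr
      exacts [(abs_nonneg _).trans hPm, hy i j, hy i j]
    _ = (p * r'' + p' * r') * D ^ 2 := by ring

theorem stmt3_general (N : ℕ) (P R : ℝ → ℝ)
    (hP : ContDiff ℝ 2 P) (hR : ContDiff ℝ 2 R)
    (hPper : Function.Periodic P (2 * π)) (hRper : Function.Periodic R (2 * π))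
    (κ γ D tstar : ℝ) (hκ : 0 < κ)
    (ω : Fin N → ℝ) (hω : ∀ i, ω i ∈ Set.Ioo (1 - γ) (1 + γ))
    (x : Fin N → ℝ → ℝ)
    (hode : ∀ i t, HasDerivAt (x i)
      (ω i - (κ / N) * ∑ j, P (x j t) * R (x i t)) t)
    (hdisp : ∀ t ∈ Set.Icc (0:ℝ) tstar, ∀ i j, |x i t - x j t| < D)
    (C : ℝ)
    (hC : C = (⨆ y : ℝ, |P y|) * (⨆ y : ℝ, |deriv (deriv R) y|)
            + (⨆ y : ℝ, |deriv P y|) * (⨆ y : ℝ, |deriv R y|)) :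
    ∀ i j, ∀ t ∈ Set.Icc (0:ℝ) tstar,
      deriv (fun u => x i u - x j u) t <
        (2 * γ + C * κ * D ^ 2)
          - κ * P ((∑ k, x k t) / N) * deriv R ((∑ k, x k t) / N)
              * (x i t - x j t) := by
  intro i j t ht
  have h2π : 2 * π ≠ 0 := by positivity
  have hcoupling := abs_mean_mul_sub_sub_linearization_le (hP.differentiable two_ne_zero)
    (hR.differentiable two_ne_zero) hR.differentiable_deriv_two
    (hPper.abs_le_iSup_abs h2π hP.continuous)
    (hPper.deriv.abs_le_iSup_abs h2π (hP.continuous_deriv one_le_two))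
    (hRper.deriv.abs_le_iSup_abs h2π (hR.continuous_deriv one_le_two))
    (hRper.deriv.deriv.abs_le_iSup_abs h2π (hR.deriv' (n := 1)).continuous_deriv_one)
    (fun k => x k t) (fun k l => (hdisp t ht k l).le) i j
  rw [← hC] at hcoupling
  have hderiv : deriv (fun u => x i u - x j u) t = (ω i - ω j)
      - κ * ((∑ k, P (x k t)) / N * (R (x i t) - R (x j t))) := by
    have hδ : HasDerivAt (fun u => x i u - x j u) _ t := (hode i t).sub (hode j t)
    rw [hδ.deriv, ← sum_mul, ← sum_mul]
    ring
  have hωij : ω i - ω j < 2 * γ := by linarith [(hω i).2, (hω j).1]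
  have hκcoupling := mul_le_mul_of_nonneg_left (neg_le_of_abs_le hcoupling) hκ.le
  rw [hderiv]
  linarith

theorem stmt3 (N : ℕ) (hN : 0 < N) (P R : ℝ → ℝ)
    (hP : ContDiff ℝ 2 P) (hR : ContDiff ℝ 2 R)
    (hPper : Function.Periodic P (2 * π)) (hRper : Function.Periodic R (2 * π))
    (κ γ D tstar : ℝ) (hκ : 0 < κ) (hγ : γ ∈ Set.Ioo (0:ℝ) 1) (hD : 0 < D)
    (ω : Fin N → ℝ) (hω : ∀ i, ω i ∈ Set.Ioo (1 - γ) (1 + γ))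
    (x : Fin N → ℝ → ℝ)
    (hode : ∀ i t, HasDerivAt (x i)
      (ω i - (κ / N) * ∑ j, P (x j t) * R (x i t)) t)
    (hdisp : ∀ t ∈ Set.Icc (0:ℝ) tstar, ∀ i j, |x i t - x j t| < D)
    (C : ℝ)
    (hC : C = (⨆ y : ℝ, |P y|) * (⨆ y : ℝ, |deriv (deriv R) y|)
            + (⨆ y : ℝ, |deriv P y|) * (⨆ y : ℝ, |deriv R y|)) :
    ∀ i j, ∀ t ∈ Set.Icc (0:ℝ) tstar,
      deriv (fun u => x i u - x j u) t <
        (2 * γ + C * κ * D ^ 2)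
          - κ * P ((∑ k, x k t) / N) * deriv R ((∑ k, x k t) / N)
              * (x i t - x j t) :=
  stmt3_general N P R hP hR hPper hRper κ γ D tstar hκ ω hω x hode hdisp C hC
end

section
/- For P₀(x) = 1 + cos x, R(x) = sin x, and any κ ∈ (0, 4/(3√3)), the synchronization integral satisfies ∫₀^{2π} P₀(s)R'(s)/(1 − κP₀(s)R(s)) ds = ∫₀^{2π} sin²(s)/(1 − κ(1+cos s)sin s) ds > π/3; in particular the synchronization hypothesis H3 holds for β = 0. -/
/-!
With `P = 1 + cos` and `R = sin`: since `d/ds log (1 - κ P R) = -κ (P R' + P' R) / (1 - κ P R)` and `P R` is `2π`-periodic, the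
integrals of `P R' / (1 - κ P R)` and `-P' R / (1 - κ P R) = sin² / (1 - κ P R)` coincide.
For the bound, `s ↦ 2π - s` flips the sign of `g = (1 + cos) sin` and fixes `sin²`, so the
integral of `sin² / (1 - κ g)` equals its average with that of `sin² / (1 + κ g)`, which is
`∫ sin² / (1 - κ² g²) ≥ ∫ sin² = π`. The hypothesis `κ < 4 / (3√3)` is exactly `κ² max g² < 1`.
-/

open Real intervalIntegral

theorem integral_mul_deriv_div_one_sub_eq_neg {P R P' R' : ℝ → ℝ} {κ a b : ℝ} (hP : ∀ s, HasDerivAt P (P' s) s)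
    (hR : ∀ s, HasDerivAt R (R' s) s) (hP' : Continuous P') (hR' : Continuous R')
    (hκ : κ ≠ 0) (hD : ∀ s, 1 - κ * (P s * R s) ≠ 0) (hPab : P a = P b) (hRab : R a = R b) :
    ∫ s in a..b, P s * R' s / (1 - κ * (P s * R s)) =
      -∫ s in a..b, P' s * R s / (1 - κ * (P s * R s)) := by
  have hPc : Continuous P := continuous_iff_continuousAt.2 fun s => (hP s).continuousAt
  have hRc : Continuous R := continuous_iff_continuousAt.2 fun s => (hR s).continuousAt
  have hint : ∀ {f : ℝ → ℝ}, Continuous f →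
      IntervalIntegrable (fun s => f s / (1 - κ * (P s * R s))) MeasureTheory.volume a b :=
    fun hf => (hf.div (by fun_prop) hD).intervalIntegrable _ _
  have hlog : ∀ s, HasDerivAt (fun s => -κ⁻¹ * log (1 - κ * (P s * R s)))
      ((P s * R' s + P' s * R s) / (1 - κ * (P s * R s))) s := by
    intro s
    have h := ((((hP s).mul (hR s)).const_mul κ).const_sub 1).log (hD s) |>.const_mul (-κ⁻¹)
    refine h.congr_deriv ?_
    simp only [Pi.mul_apply]
    field_simp
    ring
  have hsum : ∫ s in a..b, (P s * R' s + P' s * R s) / (1 - κ * (P s * R s)) = 0 := by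
    rw [integral_eq_sub_of_hasDerivAt (fun s _ => hlog s) (hint (by fun_prop)), hPab, hRab,
      sub_self]
  simp only [add_div] at hsum
  rw [integral_add (hint (by fun_prop)) (hint (by fun_prop))] at hsum
  linarith

theorem two_mul_le_div_one_sub_add_div_one_add {w x : ℝ} (hw : 0 ≤ w) (hx : |x| < 1) :
    2 * w ≤ w / (1 - x) + w / (1 + x) := by
  obtain ⟨hx₁, hx₂⟩ := abs_lt.1 hx
  have hsq : x ^ 2 < 1 := (sq_lt_one_iff_abs_lt_one x).2 hx
  rw [div_add_div _ _ (by linarith) (by linarith), le_div_iff₀ (by nlinarith)]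
  nlinarith [mul_nonneg hw (sq_nonneg x)]

theorem integral_le_integral_div_one_sub_of_antisymm {w h : ℝ → ℝ} {a b : ℝ} (hab : a ≤ b)
    (hw : Continuous w) (hh : Continuous h) (hw0 : ∀ s, 0 ≤ w s) (hh1 : ∀ s, |h s| < 1)
    (hw_refl : ∀ s, w (a + b - s) = w s) (hh_refl : ∀ s, h (a + b - s) = -h s) :
    ∫ s in a..b, w s ≤ ∫ s in a..b, w s / (1 - h s) := by
  have hsub : ∀ s, 0 < 1 - h s := fun s => by linarith [(abs_lt.1 (hh1 s)).2]
  have hadd : ∀ s, 0 < 1 + h s := fun s => by linarith [(abs_lt.1 (hh1 s)).1]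
  have hint_sub : IntervalIntegrable (fun s => w s / (1 - h s)) MeasureTheory.volume a b :=
    (hw.div (by fun_prop) fun s => (hsub s).ne').intervalIntegrable _ _
  have hint_add : IntervalIntegrable (fun s => w s / (1 + h s)) MeasureTheory.volume a b :=
    (hw.div (by fun_prop) fun s => (hadd s).ne').intervalIntegrable _ _
  have hrefl : ∫ s in a..b, w s / (1 - h s) = ∫ s in a..b, w s / (1 + h s) := by
    have hcomp := integral_comp_sub_left (a := a) (b := b) (fun s => w s / (1 - h s)) (a + b)
    simp only [add_sub_cancel_right, add_sub_cancel_left, hw_refl, hh_refl, sub_neg_eq_add]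
      at hcomp
    exact hcomp.symm
  have hmono := integral_mono_on hab ((hw.const_mul 2).intervalIntegrable _ _)
    (hint_sub.add hint_add) fun s _ => two_mul_le_div_one_sub_add_div_one_add (hw0 s) (hh1 s)
  rw [integral_const_mul, integral_add hint_sub hint_add, ← hrefl] at hmono
  linarith

theorem sq_one_add_cos_mul_sin_le (s : ℝ) : ((1 + cos s) * sin s) ^ 2 ≤ 27 / 16 := by
  have := sin_sq_add_cos_sq s
  nlinarith [neg_one_le_cos s, cos_le_one s, sq_nonneg (2 * cos s - 1), sq_nonneg (2 * cos s + 3)]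

theorem abs_mul_one_add_cos_mul_sin_lt_one {κ : ℝ} (hκ : |κ| < 4 / (3 * √3)) (s : ℝ) :
    |κ * ((1 + cos s) * sin s)| < 1 := by
  have hκ27 : κ ^ 2 * 27 < 16 := by
    have h3 : (0 : ℝ) < 3 * √3 := by positivity
    have h := (lt_div_iff₀ h3).1 hκ
    nlinarith [sq_sqrt (show (0 : ℝ) ≤ 3 by norm_num), sqrt_nonneg 3, abs_nonneg κ, sq_abs κ]
  rw [← sq_lt_one_iff_abs_lt_one, mul_pow]
  nlinarith [sq_one_add_cos_mul_sin_le s, sq_nonneg κ]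

theorem stmt10 (κ : ℝ) (hκ : κ ∈ Set.Ioo (0:ℝ) (4 / (3 * Real.sqrt 3))) :
    (∫ s in (0:ℝ)..(2 * π),
        (1 + Real.cos s) * Real.cos s / (1 - κ * ((1 + Real.cos s) * Real.sin s)))
      = (∫ s in (0:ℝ)..(2 * π),
          Real.sin s ^ 2 / (1 - κ * ((1 + Real.cos s) * Real.sin s))) ∧
    π / 3 < ∫ s in (0:ℝ)..(2 * π),
        Real.sin s ^ 2 / (1 - κ * ((1 + Real.cos s) * Real.sin s)) := by
  obtain ⟨hκ0, hκ1⟩ := hκ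
  have hκg := abs_mul_one_add_cos_mul_sin_lt_one (κ := κ) (by rwa [abs_of_pos hκ0])
  have hD : ∀ s, 1 - κ * ((1 + cos s) * sin s) ≠ 0 := fun s =>
    (sub_pos.2 (abs_lt.1 (hκg s)).2).ne'
  refine ⟨?_, ?_⟩
  · rw [integral_mul_deriv_div_one_sub_eq_neg (P' := fun s => -sin s)
      (fun s => (hasDerivAt_cos s).const_add 1) hasDerivAt_sin (by fun_prop) continuous_cos
      hκ0.ne' hD (by simp) (by simp),
      ← integral_neg]
    congr 1 with s
    ring
  · have hsin_sq : ∫ s in (0:ℝ)..(2 * π), sin s ^ 2 = π := by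
      rw [integral_sin_sq]; simp
    calc π / 3 < π := by linarith [pi_pos]
      _ = ∫ s in (0:ℝ)..(2 * π), sin s ^ 2 := hsin_sq.symm
      _ ≤ _ := integral_le_integral_div_one_sub_of_antisymm (by positivity) (by fun_prop)
          (by fun_prop) (fun s => sq_nonneg _) hκg
          (fun s => by simp [sin_sub])
          (fun s => by simp [sin_sub])
end
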